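/- arXiv:1112.1841 — 2 statements merged into one kernel-verified Lean document; each statement's English description precedes it below -/
import Mathlib

section
/- Let σ be a consistent and non-overlapping substitution, P a C_σ-covered pattern and c_0 a cell of P. For each cell c ∈ P choose a C_σ-path γ_c of P from c_0 to c (such a path exists since P is C_σ-covered). Then the union ⋃_{c ∈ P} (σ_base(type of c) + ω_σ(γ_c)) is a pattern, i.e., all its cells have pairwise distinct vectors, and it does not depend on the choice of the paths γ_c. -/
open scoped Classical

/-- A combinatorial substitution on alphabet `A` with vectors in `V`:
a base rule sending each letter to a pattern, together with a deterministic
finite set of concatenation rules.  `rule t t' u = some v` encodes the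
concatenation rule `(t, t', u) ↦ v`. -/
structure Subst (A : Type*) (V : Type*) [AddCommGroup V] where
  /-- the base rule -/
  base : A → Finset (V × A)
  /-- the image of a letter is a pattern: its cells have distinct vectors -/
  basePat : ∀ t : A, ∀ c ∈ base t, ∀ c' ∈ base t, c.1 = c'.1 → c = c'
  /-- the concatenation rules, as a partial function -/
  rule : A → A → V → Option V
  /-- there are finitely many concatenation rules -/
  finiteRules : {u : V | ∃ t t', rule t t' u ≠ none}.Finite
  /-- determinism: no two rules with left-hand sides `(t,t',u)` and `(t,t',-u)` -/
  det : ∀ t t' u, (rule t t' u).isSome → (rule t t' (-u)).isSome → u = -u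

/-- A pattern is a finite set of cells with pairwise distinct vectors. -/
def IsPattern {V A : Type*} (P : Finset (V × A)) : Prop :=
  ∀ c ∈ P, ∀ c' ∈ P, c.1 = c'.1 → c = c'

namespace Subst

variable {A V : Type*} [AddCommGroup V]

/-- `σ_rule(c, c')`: the relative position of the images of the two cells
`c`, `c'`, when some concatenation rule applies to them. -/
def ruleVec (σ : Subst A V) (c c' : V × A) : Option V :=
  match σ.rule c.2 c'.2 (c'.1 - c.1) with
  | some v => some v
  | none => (σ.rule c'.2 c.2 (c.1 - c'.1)).map (fun v => -v)

/-- The image vector `ω_σ(γ)` of a path `γ`. -/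
def omega (σ : Subst A V) (γ : List (V × A)) : V :=
  ((γ.zip γ.tail).map (fun p => (σ.ruleVec p.1 p.2).getD 0)).sum

/-- A `C_σ`-path: a nonempty sequence of cells in which any two consecutive
cells form a translated copy of a starting pattern of `σ`, and any two cells
with the same vector are equal. -/
def IsPath (σ : Subst A V) (γ : List (V × A)) : Prop :=
  γ ≠ [] ∧ γ.Chain' (fun c c' => (σ.ruleVec c c').isSome) ∧
    ∀ c ∈ γ, ∀ c' ∈ γ, c.1 = c'.1 → c = c'

/-- A `C_σ`-path of the pattern `P`. -/
def IsPathOf (σ : Subst A V) (P : Finset (V × A)) (γ : List (V × A)) : Prop :=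
  σ.IsPath γ ∧ ∀ c ∈ γ, c ∈ P

/-- A `C_σ`-loop of the pattern `P`. -/
def IsLoopOf (σ : Subst A V) (P : Finset (V × A)) (γ : List (V × A)) : Prop :=
  σ.IsPathOf P γ ∧ γ.head? = γ.getLast?

/-- `P` is `C_σ`-covered: any two of its cells are joined by a `C_σ`-path of `P`. -/
def Covered (σ : Subst A V) (P : Finset (V × A)) : Prop :=
  ∀ c ∈ P, ∀ c' ∈ P,
    ∃ γ, σ.IsPathOf P γ ∧ γ.head? = some c ∧ γ.getLast? = some c'

/-- `σ` is consistent on `P`: any two `C_σ`-paths of `P` with the same first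
and last cells have the same image vector. -/
def ConsistentOn (σ : Subst A V) (P : Finset (V × A)) : Prop :=
  ∀ γ γ' : List (V × A), σ.IsPathOf P γ → σ.IsPathOf P γ' →
    γ.head? = γ'.head? → γ.getLast? = γ'.getLast? → σ.omega γ = σ.omega γ'

/-- `σ` is consistent: it is consistent on every `C_σ`-covered pattern. -/
def Consistent (σ : Subst A V) : Prop :=
  ∀ P : Finset (V × A), IsPattern P → σ.Covered P → σ.ConsistentOn P

/-- The support of the image of a letter. -/
noncomputable def supp (σ : Subst A V) (t : A) : Finset V :=
  (σ.base t).image Prod.fst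

/-- `σ` is non-overlapping on `P`: the images of two distinct cells of `P`
joined by a `C_σ`-path of `P` have disjoint supports. -/
def NonOverlappingOn (σ : Subst A V) (P : Finset (V × A)) : Prop :=
  ∀ c ∈ P, ∀ c' ∈ P, c ≠ c' → ∀ γ, σ.IsPathOf P γ →
    γ.head? = some c → γ.getLast? = some c' →
    ∀ b ∈ σ.supp c'.2, σ.omega γ + b ∉ σ.supp c.2

/-- `σ` is non-overlapping: it is non-overlapping on every `C_σ`-covered pattern. -/
def NonOverlapping (σ : Subst A V) : Prop :=
  ∀ P : Finset (V × A), IsPattern P → σ.Covered P → σ.NonOverlappingOn P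

end Subst

/-- The candidate image of a pattern `P` by `σ`, computed using a choice
`g` of `C_σ`-paths: the union over the cells `c` of `P` of the base image of
(the type of) `c`, translated by the image vector of the chosen path `g c`. -/
noncomputable def Subst.imageWith {A V : Type*} [AddCommGroup V] (σ : Subst A V)
    (P : Finset (V × A)) (g : V × A → List (V × A)) : Finset (V × A) :=
  P.biUnion fun c => (σ.base c.2).image fun b => (σ.omega (g c) + b.1, b.2)

namespace Subst

variable {A V : Type*} [AddCommGroup V]

lemma omega_cons_cons (σ : Subst A V) (a b : V × A) (l : List (V × A)) :
    σ.omega (a :: b :: l) = (σ.ruleVec a b).getD 0 + σ.omega (b :: l) := by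
  simp [omega]

lemma omega_append (σ : Subst A V) :
    ∀ (γ₁ : List (V × A)) (c : V × A) (γ₂ : List (V × A)),
      γ₁.getLast? = some c →
      σ.omega (γ₁ ++ γ₂) = σ.omega γ₁ + σ.omega (c :: γ₂)
  | [], c, γ₂, h => by simp at h
  | [a], c, γ₂, h => by
      simp only [List.getLast?_singleton, Option.some.injEq] at h
      subst h
      simp [omega]
  | a :: b :: l, c, γ₂, h => by
      rw [List.getLast?_cons_cons] at h
      have ih := omega_append σ (b :: l) c γ₂ h
      simp only [List.cons_append] at ih ⊢
      rw [omega_cons_cons, omega_cons_cons, ih, add_assoc]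

lemma omega_path_eq {σ : Subst A V} {P : Finset (V × A)} (hP : IsPattern P)
    (hcons : σ.ConsistentOn P) {c₀ c c' : V × A}
    {γc γc' γ : List (V × A)}
    (hgc : σ.IsPathOf P γc) (h1 : γc.head? = some c₀) (h2 : γc.getLast? = some c)
    (hgc' : σ.IsPathOf P γc') (h1' : γc'.head? = some c₀)
    (h2' : γc'.getLast? = some c')
    (hγ : σ.IsPathOf P γ) (hh : γ.head? = some c) (hl : γ.getLast? = some c')
    (hne : c ≠ c') :
    σ.omega γc + σ.omega γ = σ.omega γc' := by
  obtain ⟨rest, rfl⟩ : ∃ rest, γ = c :: rest := by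
    cases γ with
    | nil => simp at hh
    | cons a t =>
        simp only [List.head?_cons, Option.some.injEq] at hh
        exact ⟨t, by rw [hh]⟩
  have hrest : rest ≠ [] := by
    rintro rfl
    simp at hl
    exact hne hl
  have hδ : σ.IsPathOf P (γc ++ rest) := by
    refine ⟨⟨?_, ?_, ?_⟩, ?_⟩
    · simp [hgc.1.1]
    · refine List.IsChain.append hgc.1.2.1 (List.isChain_cons.mp hγ.1.2.1).2 ?_
      intro x hx y hy
      rw [h2] at hx
      cases hx
      exact (List.isChain_cons.mp hγ.1.2.1).1 y hy
    · intro x hx y hy hxy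
      rcases List.mem_append.mp hx with hx | hx
      · rcases List.mem_append.mp hy with hy | hy
        · exact hP x (hgc.2 x hx) y (hgc.2 y hy) hxy
        · exact hP x (hgc.2 x hx) y (hγ.2 y (List.mem_cons_of_mem _ hy)) hxy
      · rcases List.mem_append.mp hy with hy | hy
        · exact hP x (hγ.2 x (List.mem_cons_of_mem _ hx)) y (hgc.2 y hy) hxy
        · exact hP x (hγ.2 x (List.mem_cons_of_mem _ hx))
            y (hγ.2 y (List.mem_cons_of_mem _ hy)) hxy
    · intro x hx
      rcases List.mem_append.mp hx with hx | hx
      · exact hgc.2 x hx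
      · exact hγ.2 x (List.mem_cons_of_mem _ hx)
  have hhead : (γc ++ rest).head? = some c₀ := by
    obtain ⟨a, t, rfl⟩ := List.exists_cons_of_ne_nil hgc.1.1
    simpa using h1
  have hlast : (γc ++ rest).getLast? = some c' := by
    obtain ⟨b, t, rfl⟩ := List.exists_cons_of_ne_nil hrest
    rw [List.getLast?_append_cons]
    rwa [List.getLast?_cons_cons] at hl
  have := hcons (γc ++ rest) γc' ⟨hδ.1, hδ.2⟩ hgc'
    (by rw [hhead, h1']) (by rw [hlast, h2'])
  rw [σ.omega_append γc c rest h2] at this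
  exact this

end Subst

/-- Let `σ` be a consistent non-overlapping substitution,
`P` a `C_σ`-covered pattern, `c₀ ∈ P`, and choose for each cell `c ∈ P` a
`C_σ`-path `g c` of `P` from `c₀` to `c`.  Then
`⋃_{c ∈ P} (σ_base(type c) + ω_σ(g c))` is a pattern (its cells have pairwise
distinct vectors), and it does not depend on the choice of the paths. -/
theorem imageWith_isPattern_and_indep {A : Type*} [Fintype A] {d : ℕ}
    (σ : Subst A (Fin d → ℤ)) (hcons : σ.Consistent) (hno : σ.NonOverlapping)
    (P : Finset ((Fin d → ℤ) × A)) (hP : IsPattern P) (hcov : σ.Covered P)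
    (c₀ : (Fin d → ℤ) × A) (hc₀ : c₀ ∈ P)
    (g : (Fin d → ℤ) × A → List ((Fin d → ℤ) × A))
    (hg : ∀ c ∈ P, σ.IsPathOf P (g c) ∧ (g c).head? = some c₀ ∧
      (g c).getLast? = some c) :
    IsPattern (σ.imageWith P g) ∧
      ∀ g' : (Fin d → ℤ) × A → List ((Fin d → ℤ) × A),
        (∀ c ∈ P, σ.IsPathOf P (g' c) ∧ (g' c).head? = some c₀ ∧
          (g' c).getLast? = some c) →
        σ.imageWith P g = σ.imageWith P g' := by
  have key : ∀ c ∈ P, ∀ c' ∈ P, c ≠ c' → ∀ b ∈ σ.base c.2, ∀ b' ∈ σ.base c'.2,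
      σ.omega (g c) + b.1 ≠ σ.omega (g c') + b'.1 := by
    intro c hc c' hc' hne b hb b' hb' heq
    obtain ⟨γ, hγ, hh, hl⟩ := hcov c hc c' hc'
    obtain ⟨hgc, h1, h2⟩ := hg c hc
    obtain ⟨hgc', h1', h2'⟩ := hg c' hc'
    have hω := Subst.omega_path_eq hP (hcons P hP hcov) hgc h1 h2 hgc' h1' h2'
      hγ hh hl hne
    have hmem := hno P hP hcov c hc c' hc' hne γ hγ hh hl b'.1
      (by simp only [Subst.supp, Finset.mem_image]; exact ⟨b', hb', rfl⟩)
    apply hmem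
    have hb1 : σ.omega γ + b'.1 = b.1 := by
      have h3 : σ.omega (g c) + (σ.omega γ + b'.1) = σ.omega (g c) + b.1 := by
        rw [← add_assoc, hω, heq]
      exact add_left_cancel h3
    rw [hb1]
    simp only [Subst.supp, Finset.mem_image]
    exact ⟨b, hb, rfl⟩
  constructor
  · intro x hx y hy hxy
    simp only [Subst.imageWith, Finset.mem_biUnion, Finset.mem_image] at hx hy
    obtain ⟨c, hc, b, hb, rfl⟩ := hx
    obtain ⟨c', hc', b', hb', rfl⟩ := hy
    simp only at hxy
    by_cases hcc : c = c'
    · subst hcc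
      have hb1 : b.1 = b'.1 := by
        have := add_left_cancel hxy
        exact this
      have := σ.basePat c.2 b hb b' hb' hb1
      rw [this]
    · exact absurd hxy (key c hc c' hc' hcc b hb b' hb')
  · intro g' hg'
    have homega : ∀ c ∈ P, σ.omega (g c) = σ.omega (g' c) := by
      intro c hc
      obtain ⟨hgc, h1, h2⟩ := hg c hc
      obtain ⟨hgc', h1', h2'⟩ := hg' c hc
      exact hcons P hP hcov _ _ hgc hgc' (by rw [h1, h1']) (by rw [h2, h2'])
    ext x
    simp only [Subst.imageWith, Finset.mem_biUnion, Finset.mem_image]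
    constructor
    · rintro ⟨c, hc, b, hb, rfl⟩
      exact ⟨c, hc, b, hb, by rw [homega c hc]⟩
    · rintro ⟨c, hc, b, hb, rfl⟩
      exact ⟨c, hc, b, hb, by rw [homega c hc]⟩
end

section
/- Let A be a finite alphabet, S ⊆ A^{ℤ²} a set of configurations, and P_1,…,P_n the (finitely many) 2×2 patterns that appear in some configuration of S. Let σ be a two-dimensional substitution that is 𝒫-domino-complete for 𝒫 = {P_1,…,P_n}, i.e., C_σ equals the set of dominoes appearing (up to translation) in the patterns P_1,…,P_n. Then σ is consistent on every C_σ-covered pattern that appears in a configuration of S if and only if σ is consistent on each of the patterns P_1,…,P_n. -/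
open scoped Classical

/-- A domino: a two-cell two-dimensional pattern whose vectors differ by
`(1,0)`, `(-1,0)`, `(0,1)` or `(0,-1)`. -/
def IsDomino {A : Type*} (P : Finset ((ℤ × ℤ) × A)) : Prop :=
  ∃ (v u : ℤ × ℤ) (t t' : A), (u = (1, 0) ∨ u = (0, 1)) ∧
    P = {(v, t), (v + u, t')}

/-- A `2 × 2` pattern: a pattern whose support is a translate of
`{0,1} × {0,1}`. -/
def IsTwoByTwo {A : Type*} (P : Finset ((ℤ × ℤ) × A)) : Prop :=
  IsPattern P ∧ ∃ w : ℤ × ℤ,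
    P.image Prod.fst = ({w, w + (1, 0), w + (0, 1), w + (1, 1)} : Finset (ℤ × ℤ))

/-- A two-dimensional substitution is domino-complete when its starting
patterns are exactly all the dominoes. -/
def Subst.DominoComplete {A : Type*} (σ : Subst A (ℤ × ℤ)) : Prop :=
  (∀ (t t' : A) (u : ℤ × ℤ), σ.rule t t' u ≠ none →
      u = (1, 0) ∨ u = (-1, 0) ∨ u = (0, 1) ∨ u = (0, -1)) ∧
  ∀ t t' : A,
    (σ.ruleVec ((0, 0), t) ((1, 0), t')).isSome ∧
    (σ.ruleVec ((0, 0), t) ((0, 1), t')).isSome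

/-- The pattern `P` appears in the configuration `x` (up to a translation). -/
def AppearsIn {A : Type*} (x : (ℤ × ℤ) → A) (P : Finset ((ℤ × ℤ) × A)) : Prop :=
  ∃ w : ℤ × ℤ, ∀ c ∈ P, x (c.1 + w) = c.2

/-- The pattern `P` appears in some configuration of `S`. -/
def AppearsInSys {A : Type*} (S : Set ((ℤ × ℤ) → A))
    (P : Finset ((ℤ × ℤ) × A)) : Prop :=
  ∃ x ∈ S, AppearsIn x P

/-- `σ` is `𝒫`-domino-complete, where `𝒫` is the set of `2 × 2` patterns
appearing in configurations of `S`: the starting patterns of `σ` are exactly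
the dominoes appearing (up to translation) in the patterns of `𝒫`,
equivalently the dominoes appearing in configurations of `S`. -/
def PDominoComplete {A : Type*} (σ : Subst A (ℤ × ℤ))
    (S : Set ((ℤ × ℤ) → A)) : Prop :=
  (∀ (t t' : A) (u : ℤ × ℤ), σ.rule t t' u ≠ none →
      IsDomino ({(((0 : ℤ), (0 : ℤ)), t), (u, t')} : Finset ((ℤ × ℤ) × A)) ∧
      AppearsInSys S ({(((0 : ℤ), (0 : ℤ)), t), (u, t')} : Finset ((ℤ × ℤ) × A))) ∧
  ∀ P : Finset ((ℤ × ℤ) × A), IsDomino P → AppearsInSys S P →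
    ∀ c ∈ P, ∀ c' ∈ P, c ≠ c' → (σ.ruleVec c c').isSome

/-!
Consistency on a pattern amounts to a potential: a map `φ` on cells with
`σ_rule(c, c') = φ c' - φ c` for all rule-linked cells. In a configuration `x` of `S`, rule-linked
cells are grid neighbours, and consistency on the `2 × 2` windows of `x` says that the induced
weights on the edges of `ℤ²` are antisymmetric and sum to zero around every unit square. Such a
closed discrete 1-form on `ℤ²` is exact, and its potential, translated, makes `σ` consistent on
every pattern appearing in `x`. Conversely, domino-completeness links the neighbouring cells of a
`2 × 2` pattern appearing in `S`, so such a pattern is `C_σ`-covered.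
-/

namespace Subst

variable {A V : Type*} [AddCommGroup V] (σ : Subst A V)

def stepVec (c c' : V × A) : V :=
  (σ.ruleVec c c').getD 0

theorem omega_singleton (c : V × A) : σ.omega [c] = 0 := by
  simp [omega]

theorem omega_cons_cons_s5 (c c' : V × A) (l : List (V × A)) :
    σ.omega (c :: c' :: l) = σ.stepVec c c' + σ.omega (c' :: l) := by
  simp [omega, stepVec]

theorem isSome_ruleVec_comm (c c' : V × A) :
    (σ.ruleVec c c').isSome ↔ (σ.ruleVec c' c).isSome := by
  unfold ruleVec
  cases σ.rule c.2 c'.2 (c'.1 - c.1) <;> cases σ.rule c'.2 c.2 (c.1 - c'.1) <;> simp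

theorem ruleVec_add_right (c c' : V × A) (w : V) :
    σ.ruleVec (c.1 + w, c.2) (c'.1 + w, c'.2) = σ.ruleVec c c' := by
  simp [ruleVec]

theorem isPathOf_of_isChain {P : Finset (V × A)} (hP : IsPattern P) {γ : List (V × A)}
    (hne : γ ≠ []) (hγ : γ.IsChain fun c c' => (σ.ruleVec c c').isSome)
    (hmem : ∀ c ∈ γ, c ∈ P) : σ.IsPathOf P γ :=
  ⟨⟨hne, hγ, fun c hc c' hc' => hP c (hmem c hc) c' (hmem c' hc')⟩, hmem⟩

def Adj (P : Finset (V × A)) (c c' : V × A) : Prop :=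
  c ∈ P ∧ c' ∈ P ∧ (σ.ruleVec c c').isSome

theorem covered_of_reflTransGen {P : Finset (V × A)} (hP : IsPattern P) (a : V × A)
    (hreach : ∀ c ∈ P, Relation.ReflTransGen (σ.Adj P) a c) : σ.Covered P := by
  have hsymm {c c'} (h : Relation.ReflTransGen (σ.Adj P) c c') :
      Relation.ReflTransGen (σ.Adj P) c' c :=
    Relation.ReflTransGen.mono (fun _ _ ⟨hd, hd', hs⟩ =>
      ⟨hd', hd, (σ.isSome_ruleVec_comm _ _).1 hs⟩) _ _ (Relation.reflTransGen_swap.2 h)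
  intro c hc c' hc'
  obtain ⟨l, hl, hlast⟩ := List.exists_isChain_cons_of_relationReflTransGen
    ((hsymm (hreach c hc)).trans (hreach c' hc'))
  have hmem : ∀ d ∈ c :: l, d ∈ P :=
    hl.induction _ _ (fun _ _ hd _ => hd.2.1) fun _ => hc
  refine ⟨c :: l, σ.isPathOf_of_isChain hP (List.cons_ne_nil _ _)
    (hl.imp fun _ _ hd => hd.2.2) hmem, rfl, ?_⟩
  rw [List.getLast?_eq_some_getLast (List.cons_ne_nil _ _), hlast]

theorem omega_eq_sub_of_isChain (φ : V × A → V) :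
    ∀ {γ : List (V × A)} {a b : V × A},
      γ.IsChain (fun c c' => σ.stepVec c c' = φ c' - φ c) →
      γ.head? = some a → γ.getLast? = some b → σ.omega γ = φ b - φ a
  | [], _, _, _, ha, _ => by simp at ha
  | [c], a, b, _, ha, hb => by
      simp only [List.head?_cons, List.getLast?_singleton, Option.some.injEq] at ha hb
      simp [← ha, ← hb, omega_singleton]
  | c :: c' :: l, a, b, hγ, ha, hb => by
      obtain ⟨hcc', hl⟩ := List.isChain_cons_cons.1 hγ
      rw [List.getLast?_cons_cons] at hb
      cases ha
      rw [omega_cons_cons_s5, omega_eq_sub_of_isChain φ hl rfl hb, hcc']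
      abel

theorem consistentOn_of_potential {P : Finset (V × A)} (φ : V × A → V)
    (hφ : ∀ c ∈ P, ∀ c' ∈ P, (σ.ruleVec c c').isSome → σ.stepVec c c' = φ c' - φ c) :
    σ.ConsistentOn P := by
  have key : ∀ γ, σ.IsPathOf P γ → ∀ a b, γ.head? = some a → γ.getLast? = some b →
      σ.omega γ = φ b - φ a :=
    fun γ hγ _ _ => σ.omega_eq_sub_of_isChain φ
      (hγ.1.2.1.imp_of_mem_imp fun c c' hc hc' => hφ c (hγ.2 c hc) c' (hγ.2 c' hc'))
  intro γ γ' hγ hγ' hhead hlast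
  have ha := List.head?_eq_some_head hγ.1.1
  have hb := List.getLast?_eq_some_getLast hγ.1.1
  rw [key γ hγ _ _ ha hb, key γ' hγ' _ _ (hhead ▸ ha) (hlast ▸ hb)]

variable {σ}

theorem ConsistentOn.stepVec_add_stepVec_swap {P : Finset (V × A)} (hcons : σ.ConsistentOn P)
    (hP : IsPattern P) {a b : V × A} (ha : a ∈ P) (hb : b ∈ P)
    (hab : (σ.ruleVec a b).isSome) : σ.stepVec a b + σ.stepVec b a = 0 := by
  have hba := (σ.isSome_ruleVec_comm a b).1 hab
  have := hcons [a, b, a] [a]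
    (σ.isPathOf_of_isChain hP (by simp) (by simp [hab, hba]) (by simp [ha, hb]))
    (σ.isPathOf_of_isChain hP (by simp) (by simp) (by simp [ha])) rfl rfl
  simpa [omega_cons_cons_s5, omega_singleton] using this

theorem ConsistentOn.stepVec_square {P : Finset (V × A)} (hcons : σ.ConsistentOn P)
    (hP : IsPattern P) {a b c d : V × A} (ha : a ∈ P) (hb : b ∈ P) (hc : c ∈ P) (hd : d ∈ P)
    (hab : (σ.ruleVec a b).isSome) (hbd : (σ.ruleVec b d).isSome)
    (hac : (σ.ruleVec a c).isSome) (hcd : (σ.ruleVec c d).isSome) :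
    σ.stepVec a b + σ.stepVec b d = σ.stepVec a c + σ.stepVec c d := by
  have := hcons [a, b, d] [a, c, d]
    (σ.isPathOf_of_isChain hP (by simp) (by simp [hab, hbd]) (by simp [ha, hb, hd]))
    (σ.isPathOf_of_isChain hP (by simp) (by simp [hac, hcd]) (by simp [ha, hc, hd])) rfl rfl
  simpa [omega_cons_cons_s5, omega_singleton] using this

end Subst

theorem exists_primitive_int {W : Type*} [AddCommGroup W] (g : ℤ → W) :
    ∃ F : ℤ → W, F 0 = 0 ∧ ∀ n, F (n + 1) = F n + g n := by
  refine ⟨fun n => ∑ k ∈ Finset.Ico 0 n, g k - ∑ k ∈ Finset.Ico n 0, g k, by simp, fun n => ?_⟩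
  dsimp only
  rcases le_or_gt 0 n with hn | hn
  · rw [← Finset.insert_Ico_right_eq_Ico_add_one hn, Finset.sum_insert (by simp),
      Finset.Ico_eq_empty_of_le hn, Finset.Ico_eq_empty_of_le (by omega : (0 : ℤ) ≤ n + 1)]
    simp only [Finset.sum_empty]
    abel
  · rw [← Finset.insert_Ico_add_one_left_eq_Ico hn, Finset.sum_insert (by simp),
      Finset.Ico_eq_empty_of_le hn.le, Finset.Ico_eq_empty_of_le (by omega : n + 1 ≤ 0)]
    simp only [Finset.sum_empty]
    abel

/-- A closed discrete 1-form on `ℤ²`, with weights `h` on horizontal and `v` on vertical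
edges, is exact. -/
theorem exists_potential_of_square {W : Type*} [AddCommGroup W] (h v : ℤ × ℤ → W)
    (hsq : ∀ p q, h (p, q) + v (p + 1, q) = v (p, q) + h (p, q + 1)) :
    ∃ φ : ℤ × ℤ → W, ∀ p q,
      φ (p + 1, q) = φ (p, q) + h (p, q) ∧ φ (p, q + 1) = φ (p, q) + v (p, q) := by
  obtain ⟨F, -, hF⟩ := exists_primitive_int fun p => h (p, 0)
  choose G hG0 hG using fun p => exists_primitive_int fun q => v (p, q)
  refine ⟨fun u => F u.1 + G u.1 u.2, fun p q => ⟨?_, by simp only [hG]; abel⟩⟩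
  induction q using Int.induction_on with
  | zero => simp [hF, hG0]
  | succ q ih =>
      simp only [hG] at ih ⊢
      rw [← add_assoc, ih, add_assoc, hsq]
      abel
  | pred q ih =>
      have h1 := hG p (-q - 1)
      have h2 := hG (p + 1) (-q - 1)
      have h3 := hsq p (-q - 1)
      rw [sub_add_cancel] at h1 h2 h3
      dsimp only at ih ⊢
      apply add_right_cancel (b := v (p + 1, -q - 1))
      calc _ = F (p + 1) + G (p + 1) (-q) := by rw [h2, add_assoc]
        _ = F p + G p (-q) + h (p, -q) := ih
        _ = _ := by rw [h1, add_assoc _ (h _), h3]; abel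

def IsUnitStep (u : ℤ × ℤ) : Prop :=
  u = (1, 0) ∨ u = (-1, 0) ∨ u = (0, 1) ∨ u = (0, -1)

theorem IsUnitStep.neg {u : ℤ × ℤ} (hu : IsUnitStep u) : IsUnitStep (-u) := by
  obtain ⟨a, b⟩ := u
  simp only [IsUnitStep, Prod.neg_mk, Prod.mk.injEq] at hu ⊢
  omega

theorem exists_potential_of_isUnitStep {W : Type*} [AddCommGroup W] (E : ℤ × ℤ → ℤ × ℤ → W)
    (hswap_right : ∀ p q, E (p, q) (p + 1, q) + E (p + 1, q) (p, q) = 0)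
    (hswap_up : ∀ p q, E (p, q) (p, q + 1) + E (p, q + 1) (p, q) = 0)
    (hsquare : ∀ p q, E (p, q) (p + 1, q) + E (p + 1, q) (p + 1, q + 1) =
      E (p, q) (p, q + 1) + E (p, q + 1) (p + 1, q + 1)) :
    ∃ φ : ℤ × ℤ → W, ∀ u u', IsUnitStep (u' - u) → E u u' = φ u' - φ u := by
  obtain ⟨φ, hφ⟩ := exists_potential_of_square (fun u => E u (u.1 + 1, u.2))
    (fun u => E u (u.1, u.2 + 1)) hsquare
  refine ⟨φ, fun ⟨p, q⟩ ⟨p', q'⟩ h => ?_⟩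
  rcases h with h | h | h | h <;> simp only [Prod.mk_sub_mk, Prod.ext_iff] at h
  · obtain ⟨rfl, rfl⟩ : p' = p + 1 ∧ q' = q := by omega
    rw [(hφ _ _).1]
    abel
  · obtain ⟨rfl, rfl⟩ : p = p' + 1 ∧ q = q' := by omega
    rw [(hφ _ _).1, eq_neg_of_add_eq_zero_right (hswap_right _ _)]
    abel
  · obtain ⟨rfl, rfl⟩ : p' = p ∧ q' = q + 1 := by omega
    rw [(hφ _ _).2]
    abel
  · obtain ⟨rfl, rfl⟩ : p = p' ∧ q = q' + 1 := by omega
    rw [(hφ _ _).2, eq_neg_of_add_eq_zero_right (hswap_up _ _)]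
    abel

noncomputable def restriction {V A : Type*} (x : V → A) (F : Finset V) : Finset (V × A) :=
  F.image fun v => (v, x v)

theorem mem_restriction {V A : Type*} {x : V → A} {F : Finset V} {c : V × A} :
    c ∈ restriction x F ↔ c.1 ∈ F ∧ x c.1 = c.2 := by
  obtain ⟨v, t⟩ := c
  simp [restriction, and_comm, eq_comm]

theorem isPattern_restriction {V A : Type*} (x : V → A) (F : Finset V) :
    IsPattern (restriction x F) := fun _ hc _ hc' hcc' =>
  Prod.ext hcc' ((mem_restriction.1 hc).2.symm.trans (hcc' ▸ (mem_restriction.1 hc').2))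

theorem appearsIn_restriction {A : Type*} (x : ℤ × ℤ → A) (F : Finset (ℤ × ℤ)) :
    AppearsIn x (restriction x F) :=
  ⟨0, fun c hc => by simpa using (mem_restriction.1 hc).2⟩

noncomputable def window {A : Type*} (x : ℤ × ℤ → A) (p q : ℤ) : Finset ((ℤ × ℤ) × A) :=
  restriction x {(p, q), (p + 1, q), (p, q + 1), (p + 1, q + 1)}

theorem isTwoByTwo_window {A : Type*} (x : ℤ × ℤ → A) (p q : ℤ) : IsTwoByTwo (window x p q) :=
  ⟨isPattern_restriction _ _, (p, q), by simp [window, restriction]⟩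

theorem AppearsInSys.mono {A : Type*} {S : Set ((ℤ × ℤ) → A)} {P Q : Finset ((ℤ × ℤ) × A)}
    (hP : AppearsInSys S P) (hQP : Q ⊆ P) : AppearsInSys S Q :=
  let ⟨x, hx, w, hw⟩ := hP
  ⟨x, hx, w, fun c hc => hw c (hQP hc)⟩

theorem isUnitStep_of_isDomino {A : Type*} {t t' : A} {u : ℤ × ℤ}
    (hd : IsDomino ({((0, 0), t), (u, t')} : Finset ((ℤ × ℤ) × A))) : IsUnitStep u := by
  obtain ⟨v, e, s, s', he, hP⟩ := hd
  have hsupp := congrArg (Finset.image Prod.fst) hP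
  simp only [Finset.image_insert, Finset.image_singleton, Finset.ext_iff, Finset.mem_insert,
    Finset.mem_singleton] at hsupp
  have hv := (hsupp v).2 (.inl rfl)
  have hve := (hsupp (v + e)).2 (.inr rfl)
  simp only [IsUnitStep, Prod.ext_iff, Prod.fst_add, Prod.snd_add] at he hv hve ⊢
  omega

section

variable {A : Type*} {S : Set ((ℤ × ℤ) → A)} {σ : Subst A (ℤ × ℤ)}

theorem PDominoComplete.isUnitStep_of_isSome (h : PDominoComplete σ S) {c c' : (ℤ × ℤ) × A}
    (hs : (σ.ruleVec c c').isSome) : IsUnitStep (c'.1 - c.1) := by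
  unfold Subst.ruleVec at hs
  cases hr : σ.rule c.2 c'.2 (c'.1 - c.1) with
  | some => exact isUnitStep_of_isDomino (h.1 c.2 c'.2 _ (by simp [hr])).1
  | none =>
      rw [hr] at hs
      have hr' : σ.rule c'.2 c.2 (c.1 - c'.1) ≠ none := by
        simpa [Option.isSome_iff_ne_none] using hs
      simpa using (isUnitStep_of_isDomino (h.1 _ _ _ hr').1).neg

theorem PDominoComplete.isSome_of_appearsInSys (h : PDominoComplete σ S)
    {c c' : (ℤ × ℤ) × A} (hS : AppearsInSys S {c, c'})
    (hadj : c'.1 = c.1 + (1, 0) ∨ c'.1 = c.1 + (0, 1)) : (σ.ruleVec c c').isSome := by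
  have hne : c ≠ c' := by
    rintro rfl
    rcases hadj with hadj | hadj <;> simp [Prod.ext_iff] at hadj
  refine h.2 _ ?_ hS c (by simp) c' (by simp) hne
  rcases hadj with hadj | hadj
  · exact ⟨c.1, (1, 0), c.2, c'.2, .inl rfl, by rw [← hadj]⟩
  · exact ⟨c.1, (0, 1), c.2, c'.2, .inr rfl, by rw [← hadj]⟩

theorem Subst.covered_of_isTwoByTwo {P : Finset ((ℤ × ℤ) × A)} (hP : IsTwoByTwo P)
    (hadj : ∀ c ∈ P, ∀ c' ∈ P, (c'.1 = c.1 + (1, 0) ∨ c'.1 = c.1 + (0, 1)) →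
      (σ.ruleVec c c').isSome) : σ.Covered P := by
  obtain ⟨hpat, w, hsupp⟩ := hP
  have mem_supp : ∀ {v}, v ∈ P.image Prod.fst ↔
      v = w ∨ v = w + (1, 0) ∨ v = w + (0, 1) ∨ v = w + (1, 1) := by
    simp [hsupp]
  have step : ∀ c ∈ P, ∀ c' ∈ P, (c'.1 = c.1 + (1, 0) ∨ c'.1 = c.1 + (0, 1)) →
      Relation.ReflTransGen (σ.Adj P) c c' := fun c hc c' hc' hcc' =>
    .single ⟨hc, hc', hadj c hc c' hc' hcc'⟩
  obtain ⟨a, ha, rfl⟩ := Finset.mem_image.1 (mem_supp.2 (.inl rfl))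
  obtain ⟨b, hb, hb1⟩ := Finset.mem_image.1 (mem_supp.2 (.inr (.inl rfl)))
  refine σ.covered_of_reflTransGen hpat a fun c hc => ?_
  rcases mem_supp.1 (Finset.mem_image_of_mem _ hc) with hca | hc1 | hc2 | hc3
  · rw [hpat c hc a ha hca]
  · exact step a ha c hc (.inl hc1)
  · exact step a ha c hc (.inr hc2)
  · exact (step a ha b hb (.inl hb1)).trans
      (step b hb c hc (.inr (by rw [hc3, hb1, add_assoc]; rfl)))

theorem Subst.consistentOn_of_appearsIn {x : ℤ × ℤ → A} {P : Finset ((ℤ × ℤ) × A)}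
    (φ : ℤ × ℤ → ℤ × ℤ) (hφ : ∀ u u', (σ.ruleVec (u, x u) (u', x u')).isSome →
      σ.stepVec (u, x u) (u', x u') = φ u' - φ u)
    (hP : AppearsIn x P) : σ.ConsistentOn P := by
  obtain ⟨w, hw⟩ := hP
  refine σ.consistentOn_of_potential (fun c => φ (c.1 + w)) fun c hc c' hc' hs => ?_
  have htrans : σ.ruleVec c c' = σ.ruleVec (c.1 + w, x (c.1 + w)) (c'.1 + w, x (c'.1 + w)) := by
    rw [hw c hc, hw c' hc', σ.ruleVec_add_right]
  rw [htrans] at hs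
  rw [Subst.stepVec, htrans]
  exact hφ _ _ hs

theorem Subst.exists_potential_of_consistentOn_window {x : ℤ × ℤ → A}
    (hstep : ∀ c c', (σ.ruleVec c c').isSome → IsUnitStep (c'.1 - c.1))
    (hadj : ∀ u u', (u' = u + (1, 0) ∨ u' = u + (0, 1)) →
      (σ.ruleVec (u, x u) (u', x u')).isSome)
    (hwin : ∀ p q, σ.ConsistentOn (window x p q)) :
    ∃ φ : ℤ × ℤ → ℤ × ℤ, ∀ u u', (σ.ruleVec (u, x u) (u', x u')).isSome →
      σ.stepVec (u, x u) (u', x u') = φ u' - φ u := by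
  have hright (p q : ℤ) : (σ.ruleVec ((p, q), x (p, q)) ((p + 1, q), x (p + 1, q))).isSome :=
    hadj _ _ (.inl (by simp))
  have hup (p q : ℤ) : (σ.ruleVec ((p, q), x (p, q)) ((p, q + 1), x (p, q + 1))).isSome :=
    hadj _ _ (.inr (by simp))
  have mem {p q : ℤ} {u : ℤ × ℤ}
      (hu : u ∈ ({(p, q), (p + 1, q), (p, q + 1), (p + 1, q + 1)} : Finset (ℤ × ℤ))) :
      (u, x u) ∈ window x p q :=
    mem_restriction.2 ⟨hu, rfl⟩
  obtain ⟨φ, hφ⟩ := exists_potential_of_isUnitStep (fun u u' => σ.stepVec (u, x u) (u', x u'))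
    (fun p q => (hwin p q).stepVec_add_stepVec_swap (isPattern_restriction _ _)
      (mem (by simp)) (mem (by simp)) (hright p q))
    (fun p q => (hwin p q).stepVec_add_stepVec_swap (isPattern_restriction _ _)
      (mem (by simp)) (mem (by simp)) (hup p q))
    (fun p q => (hwin p q).stepVec_square (isPattern_restriction _ _) (mem (by simp))
      (mem (by simp)) (mem (by simp)) (mem (by simp)) (hright p q) (hup (p + 1) q) (hup p q)
      (hright p (q + 1)))
  exact ⟨φ, fun u u' hs => hφ u u' (hstep _ _ hs)⟩

end

theorem pDominoComplete_consistent_iff_twoByTwo_general {A : Type*}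
    (S : Set ((ℤ × ℤ) → A)) (σ : Subst A (ℤ × ℤ)) (h : PDominoComplete σ S) :
    (∀ P : Finset ((ℤ × ℤ) × A), IsPattern P → AppearsInSys S P →
        σ.Covered P → σ.ConsistentOn P) ↔
    (∀ P : Finset ((ℤ × ℤ) × A), IsTwoByTwo P → AppearsInSys S P →
        σ.ConsistentOn P) := by
  constructor
  · intro hcov P hP hS
    refine hcov P hP.1 hS (σ.covered_of_isTwoByTwo hP fun c hc c' hc' hadj => ?_)
    exact h.isSome_of_appearsInSys (hS.mono (by simp [Finset.insert_subset_iff, hc, hc'])) hadj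
  · rintro hwin P - ⟨x, hx, hxP⟩ -
    have hadj u u' (huu' : u' = u + (1, 0) ∨ u' = u + (0, 1)) :
        (σ.ruleVec (u, x u) (u', x u')).isSome :=
      h.isSome_of_appearsInSys ⟨x, hx, 0, by simp⟩ huu'
    obtain ⟨φ, hφ⟩ := σ.exists_potential_of_consistentOn_window
      (fun _ _ => h.isUnitStep_of_isSome) hadj
      fun p q => hwin _ (isTwoByTwo_window x p q) ⟨x, hx, appearsIn_restriction x _⟩
    exact σ.consistentOn_of_appearsIn φ hφ hxP

/-- Theorem `decconsmieux`.  Let `S ⊆ A^{ℤ²}` and let `𝒫`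
be the set of `2 × 2` patterns appearing in configurations of `S`.  A
`𝒫`-domino-complete substitution is consistent on every `C_σ`-covered
pattern appearing in a configuration of `S` if and only if it is consistent
on every `2 × 2` pattern appearing in a configuration of `S`. -/
theorem pDominoComplete_consistent_iff_twoByTwo {A : Type*} [Fintype A]
    (S : Set ((ℤ × ℤ) → A)) (σ : Subst A (ℤ × ℤ)) (h : PDominoComplete σ S) :
    (∀ P : Finset ((ℤ × ℤ) × A), IsPattern P → AppearsInSys S P →
        σ.Covered P → σ.ConsistentOn P) ↔
    (∀ P : Finset ((ℤ × ℤ) × A), IsTwoByTwo P → AppearsInSys S P →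
        σ.ConsistentOn P) :=
  pDominoComplete_consistent_iff_twoByTwo_general S σ h
end
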